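/- arXiv:1608.00419 — 2 statements merged into one kernel-verified Lean document; each statement's English description precedes it below -/
import Mathlib

section
/- Let A be an n×n matrix, ℓ ≥ 0 an integer, and let B be the 2n×2n block matrix with blocks [[A, I],[0, 0]]. Then φ_ℓ(B) equals the block matrix [[φ_ℓ(A), φ_{ℓ+1}(A)],[0, (1/ℓ!)·I]]. -/
open Matrix

/-- The matrix φ-functions: `φ_ℓ(M) = Σ_{k=0}^∞ M^k/(k+ℓ)!`. -/
noncomputable def phiM {m : Type*} [Fintype m] [DecidableEq m] (ℓ : ℕ)
    (M : Matrix m m ℝ) : Matrix m m ℝ :=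
  ∑' k : ℕ, ((Nat.factorial (k + ℓ) : ℝ))⁻¹ • M ^ k

/-! Splitting off the constant term gives `φ_ℓ(M) = I/ℓ! + φ_{ℓ+1}(M) M`. For
`B = [[A, I], [0, 0]]` one has `B^(k+1) = [[A^(k+1), A^k], [0, 0]]`, so `φ_{ℓ+1}(B) B` is
the block matrix `[[φ_{ℓ+1}(A) A, φ_{ℓ+1}(A)], [0, 0]]`, and the same identity for `A` turns
its top-left block into `φ_ℓ(A) - I/ℓ!`. -/

open Nat

theorem summable_inv_factorial_add_smul_pow {R : Type*} [NormedRing R] [NormedSpace ℝ R]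
    [CompleteSpace R] (ℓ : ℕ) (x : R) :
    Summable fun k : ℕ => ((k + ℓ)! : ℝ)⁻¹ • x ^ k := by
  refine .of_norm_bounded_eventually_nat (Real.summable_pow_div_factorial ‖x‖) ?_
  filter_upwards [Filter.eventually_gt_atTop 0] with k hk
  have hfact : ((k + ℓ)! : ℝ)⁻¹ ≤ (k ! : ℝ)⁻¹ := by
    gcongr
    exact Nat.le_add_right k ℓ
  calc ‖((k + ℓ)! : ℝ)⁻¹ • x ^ k‖ ≤ ((k + ℓ)! : ℝ)⁻¹ * ‖x‖ ^ k := by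
        rw [norm_smul, Real.norm_of_nonneg (by positivity)]
        gcongr
        exact norm_pow_le' x hk
    _ ≤ ‖x‖ ^ k / k ! := by
        rw [div_eq_inv_mul]
        gcongr

section Blocks

variable {X l m n o R : Type*} [AddCommMonoid R] [TopologicalSpace R]

theorem HasSum.matrix_fromBlocks {A : X → Matrix n l R} {B : X → Matrix n m R}
    {C : X → Matrix o l R} {D : X → Matrix o m R} {a : Matrix n l R} {b : Matrix n m R}
    {c : Matrix o l R} {d : Matrix o m R} (hA : HasSum A a) (hB : HasSum B b)
    (hC : HasSum C c) (hD : HasSum D d) :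
    HasSum (fun x => fromBlocks (A x) (B x) (C x) (D x)) (fromBlocks a b c d) := by
  refine Pi.hasSum.2 fun i => Pi.hasSum.2 fun j => ?_
  rcases i with i | i <;> rcases j with j | j
  · exact Pi.hasSum.1 (Pi.hasSum.1 hA i) j
  · exact Pi.hasSum.1 (Pi.hasSum.1 hB i) j
  · exact Pi.hasSum.1 (Pi.hasSum.1 hC i) j
  · exact Pi.hasSum.1 (Pi.hasSum.1 hD i) j

end Blocks

section Phi

variable {m : Type*} [Fintype m] [DecidableEq m]

theorem hasSum_phiM (ℓ : ℕ) (M : Matrix m m ℝ) :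
    HasSum (fun k : ℕ => ((k + ℓ)! : ℝ)⁻¹ • M ^ k) (phiM ℓ M) :=
  -- this norm induces the product topology, so the summability transfers
  letI := Matrix.linftyOpNormedRing (n := m) (α := ℝ)
  letI := Matrix.linftyOpNormedAlgebra (n := m) (R := ℝ) (α := ℝ)
  (summable_inv_factorial_add_smul_pow ℓ M).hasSum

theorem phiM_eq_smul_one_add_phiM_succ_mul (ℓ : ℕ) (M : Matrix m m ℝ) :
    phiM ℓ M = (ℓ ! : ℝ)⁻¹ • 1 + phiM (ℓ + 1) M * M := by
  have hshift :
      HasSum (fun k : ℕ => ((k + 1 + ℓ)! : ℝ)⁻¹ • M ^ (k + 1)) (phiM (ℓ + 1) M * M) :=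
    ((hasSum_phiM (ℓ + 1) M).mul_right M).congr_fun fun k => by
      rw [smul_mul_assoc, ← pow_succ, add_right_comm, add_assoc]
  rw [← (hasSum_phiM ℓ M).tsum_eq, (hasSum_phiM ℓ M).summable.tsum_eq_zero_add,
    hshift.tsum_eq, zero_add, pow_zero]

theorem fromBlocks_one_zero_zero_pow_succ {α : Type*} [Semiring α] (A : Matrix m m α) (k : ℕ) :
    fromBlocks A 1 0 (0 : Matrix m m α) ^ (k + 1) = fromBlocks (A ^ (k + 1)) (A ^ k) 0 0 := by
  induction k with
  | zero => simp
  | succ k ih => rw [pow_succ, ih, fromBlocks_multiply]; simp [pow_succ]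

theorem phiM_fromBlocks_mul_self (ℓ : ℕ) (A : Matrix m m ℝ) :
    phiM ℓ (fromBlocks A 1 0 0) * fromBlocks A 1 0 0 =
      fromBlocks (phiM ℓ A * A) (phiM ℓ A) 0 0 := by
  set B : Matrix (m ⊕ m) (m ⊕ m) ℝ := fromBlocks A 1 0 0
  have hB : HasSum (fun k : ℕ => ((k + ℓ)! : ℝ)⁻¹ • B ^ (k + 1)) (phiM ℓ B * B) :=
    ((hasSum_phiM ℓ B).mul_right B).congr_fun fun k => by rw [smul_mul_assoc, pow_succ]
  have hA := HasSum.matrix_fromBlocks ((hasSum_phiM ℓ A).mul_right A) (hasSum_phiM ℓ A)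
    (hasSum_zero (α := Matrix m m ℝ)) hasSum_zero
  refine hB.unique (hA.congr_fun fun k => ?_)
  rw [fromBlocks_one_zero_zero_pow_succ, fromBlocks_smul, smul_mul_assoc, ← pow_succ, smul_zero]

end Phi

theorem phiM_block {n : ℕ} (A : Matrix (Fin n) (Fin n) ℝ) (ℓ : ℕ) :
    phiM ℓ (Matrix.fromBlocks A (1 : Matrix (Fin n) (Fin n) ℝ) 0 0) =
      Matrix.fromBlocks (phiM ℓ A) (phiM (ℓ + 1) A) 0
        (((Nat.factorial ℓ : ℝ))⁻¹ • (1 : Matrix (Fin n) (Fin n) ℝ)) := by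
  rw [phiM_eq_smul_one_add_phiM_succ_mul, phiM_fromBlocks_mul_self,
    phiM_eq_smul_one_add_phiM_succ_mul ℓ A, ← fromBlocks_one, fromBlocks_smul, fromBlocks_add]
  simp
end

section
/- Let A, E be n×n matrices and let B = [[A, I],[0,0]], Ẽ = [[E, 0],[0,0]] be 2n×2n block matrices. Then for every integer ℓ ≥ 0, φ_ℓ(B + Ẽ) − φ_ℓ(B) is the block matrix [[φ_ℓ(A+E) − φ_ℓ(A), φ_{ℓ+1}(A+E) − φ_{ℓ+1}(A)],[0, 0]]. -/
open Matrix

section Aux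

attribute [local instance] Matrix.linftyOpNormedAddCommGroup Matrix.linftyOpNormedRing Matrix.linftyOpNormedSpace

lemma phiM_summable {m : Type*} [Fintype m] [DecidableEq m] (ℓ : ℕ) (M : Matrix m m ℝ) :
    Summable (fun k : ℕ => ((Nat.factorial (k + ℓ) : ℝ))⁻¹ • M ^ k) := by
  rw [← summable_nat_add_iff 1]
  apply Summable.of_norm
  have hsum : Summable (fun k : ℕ => ‖M‖ ^ (k + 1) / (Nat.factorial (k + 1) : ℝ)) :=
    (summable_nat_add_iff 1).2 (Real.summable_pow_div_factorial ‖M‖)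
  refine Summable.of_nonneg_of_le (fun k => norm_nonneg _) (fun k => ?_) hsum
  rw [norm_smul]
  have h1 : ‖M ^ (k + 1)‖ ≤ ‖M‖ ^ (k + 1) := norm_pow_le' M (Nat.succ_pos k)
  have h2 : ‖((Nat.factorial (k + 1 + ℓ) : ℝ))⁻¹‖ ≤ ((Nat.factorial (k + 1) : ℝ))⁻¹ := by
    rw [Real.norm_eq_abs, abs_of_nonneg (by positivity)]
    apply inv_anti₀
    · positivity
    · exact_mod_cast Nat.factorial_le (by omega)
  calc ‖((Nat.factorial (k + 1 + ℓ) : ℝ))⁻¹‖ * ‖M ^ (k + 1)‖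
      ≤ ((Nat.factorial (k + 1) : ℝ))⁻¹ * ‖M‖ ^ (k + 1) :=
        mul_le_mul h2 h1 (norm_nonneg _) (by positivity)
    _ = ‖M‖ ^ (k + 1) / (Nat.factorial (k + 1) : ℝ) := by ring

end Aux

lemma hasSum_fromBlocks {n : ℕ} {f g h' h : ℕ → Matrix (Fin n) (Fin n) ℝ}
    {a b c d : Matrix (Fin n) (Fin n) ℝ}
    (hf : HasSum f a) (hg : HasSum g b) (hc : HasSum h' c) (hd : HasSum h d) :
    HasSum (fun k => Matrix.fromBlocks (f k) (g k) (h' k) (h k))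
      (Matrix.fromBlocks a b c d) := by
  refine Pi.hasSum.2 ?_
  intro i
  rw [Pi.hasSum]
  intro j
  cases i with
  | inl i => cases j with
    | inl j => exact Pi.hasSum.1 (Pi.hasSum.1 hf i) j
    | inr j => exact Pi.hasSum.1 (Pi.hasSum.1 hg i) j
  | inr i => cases j with
    | inl j => exact Pi.hasSum.1 (Pi.hasSum.1 hc i) j
    | inr j => exact Pi.hasSum.1 (Pi.hasSum.1 hd i) j

lemma block_pow_succ {n : ℕ} (M : Matrix (Fin n) (Fin n) ℝ) (k : ℕ) :
    (Matrix.fromBlocks M (1 : Matrix (Fin n) (Fin n) ℝ) 0 0) ^ (k + 1) =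
      Matrix.fromBlocks (M ^ (k + 1)) (M ^ k) (0 : Matrix (Fin n) (Fin n) ℝ) 0 := by
  induction k with
  | zero => simp [pow_succ]
  | succ k ih =>
    rw [pow_succ, ih, Matrix.fromBlocks_multiply]
    simp [pow_succ]

lemma phiM_fromBlocks {n : ℕ} (M : Matrix (Fin n) (Fin n) ℝ) (ℓ : ℕ) :
    phiM ℓ (Matrix.fromBlocks M (1 : Matrix (Fin n) (Fin n) ℝ) 0 0) =
      Matrix.fromBlocks (phiM ℓ M) (phiM (ℓ + 1) M) (0 : Matrix (Fin n) (Fin n) ℝ)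
        (((Nat.factorial ℓ : ℝ))⁻¹ • 1) := by
  have key : HasSum
      (fun k : ℕ => ((Nat.factorial (k + ℓ) : ℝ))⁻¹ •
        (Matrix.fromBlocks M (1 : Matrix (Fin n) (Fin n) ℝ) 0 0) ^ k)
      (Matrix.fromBlocks (phiM ℓ M) (phiM (ℓ + 1) M) (0 : Matrix (Fin n) (Fin n) ℝ)
        (((Nat.factorial ℓ : ℝ))⁻¹ • 1)) := by
    have hf : HasSum (fun k : ℕ => ((Nat.factorial (k + ℓ) : ℝ))⁻¹ • M ^ k) (phiM ℓ M) :=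
      (phiM_summable ℓ M).hasSum
    have hg' : HasSum (fun k : ℕ => ((Nat.factorial (k + 1 + ℓ) : ℝ))⁻¹ • M ^ k)
        (phiM (ℓ + 1) M) := by
      have h0 := (phiM_summable (ℓ + 1) M).hasSum
      have heq : (fun k : ℕ => ((Nat.factorial (k + (ℓ + 1)) : ℝ))⁻¹ • M ^ k) =
          fun k : ℕ => ((Nat.factorial (k + 1 + ℓ) : ℝ))⁻¹ • M ^ k :=
        funext fun k => by rw [show k + (ℓ + 1) = k + 1 + ℓ by omega]
      rw [phiM, heq]
      rw [heq] at h0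
      exact h0
    -- define g, h as piecewise families
    set g : ℕ → Matrix (Fin n) (Fin n) ℝ :=
      fun k => Nat.casesOn k 0 (fun j => ((Nat.factorial (j + 1 + ℓ) : ℝ))⁻¹ • M ^ j) with hgdef
    set h : ℕ → Matrix (Fin n) (Fin n) ℝ :=
      fun k => Nat.casesOn k (((Nat.factorial ℓ : ℝ))⁻¹ • (1 : Matrix (Fin n) (Fin n) ℝ))
        (fun _ => 0) with hhdef
    have hg : HasSum g (phiM (ℓ + 1) M) := by
      have := (hasSum_nat_add_iff (f := g) 1).1 (by simpa [hgdef] using hg')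
      simpa [hgdef] using this
    have hh : HasSum h (((Nat.factorial ℓ : ℝ))⁻¹ • (1 : Matrix (Fin n) (Fin n) ℝ)) := by
      have := hasSum_single (f := h) 0 (fun b hb => by
        cases b with
        | zero => exact absurd rfl hb
        | succ b => rfl)
      simpa [hhdef] using this
    have hfun : (fun k : ℕ => ((Nat.factorial (k + ℓ) : ℝ))⁻¹ •
        (Matrix.fromBlocks M (1 : Matrix (Fin n) (Fin n) ℝ) 0 0) ^ k) =
        fun k : ℕ => Matrix.fromBlocks (((Nat.factorial (k + ℓ) : ℝ))⁻¹ • M ^ k) (g k)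
          ((0 : ℕ → Matrix (Fin n) (Fin n) ℝ) k) (h k) := by
      funext k
      cases k with
      | zero =>
        simp only [pow_zero, hgdef, hhdef, Pi.zero_apply]
        rw [← Matrix.fromBlocks_one, Matrix.fromBlocks_smul]
        simp
      | succ j =>
        rw [block_pow_succ, Matrix.fromBlocks_smul]
        simp [hgdef, hhdef]
    rw [hfun]
    exact hasSum_fromBlocks hf hg hasSum_zero hh
  rw [phiM]
  exact key.tsum_eq

theorem phiM_block_perturbation {n : ℕ} (A E : Matrix (Fin n) (Fin n) ℝ) (ℓ : ℕ) :
    phiM ℓ (Matrix.fromBlocks A (1 : Matrix (Fin n) (Fin n) ℝ) 0 0 +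
        Matrix.fromBlocks E 0 0 0) -
      phiM ℓ (Matrix.fromBlocks A (1 : Matrix (Fin n) (Fin n) ℝ) 0 0) =
      Matrix.fromBlocks (phiM ℓ (A + E) - phiM ℓ A)
        (phiM (ℓ + 1) (A + E) - phiM (ℓ + 1) A) 0 0 := by
  have hadd : Matrix.fromBlocks A (1 : Matrix (Fin n) (Fin n) ℝ) 0 0 +
      Matrix.fromBlocks E 0 0 0 =
      Matrix.fromBlocks (A + E) (1 : Matrix (Fin n) (Fin n) ℝ) (0 : Matrix (Fin n) (Fin n) ℝ) 0 := by
    rw [Matrix.fromBlocks_add]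
    simp
  rw [hadd, phiM_fromBlocks, phiM_fromBlocks, sub_eq_add_neg,
    Matrix.fromBlocks_neg, Matrix.fromBlocks_add]
  simp [sub_eq_add_neg]
end
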